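/- Suppose dataset D = {(p_i, q_i)}_{i=1}^N admits a rationalising utility u_RC (locally non-satiated, continuous, concave, strictly monotone). Then for every pair of countries i, j, the Konüs cost-of-living index satisfies the two-sided sandwich: min_k (p_j^k/p_i^k) ≤ M⁻(p_j, v_i)/M⁻(p_i, v_i) ≤ e(p_j, u_RC(q_i))/e(p_i, u_RC(q_i)) ≤ M⁺(p_j, v_i)/M⁺(p_i, v_i) ≤ (p_j · q_i)/(p_i · q_i), where the outer bounds are the classical minimum price relative and Laspeyres price index. -/

import Mathlib

/-- Inner product of a price and a quantity vector. -/
def dotp {K : ℕ} (x y : Fin K → ℝ) : ℝ := ∑ k, x k * y k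

/-- One directed edge of the Laspeyres-weighted graph has weight ≤ 1. -/
def RPstep {N K : ℕ} (p q : Fin N → Fin K → ℝ) (i j : Fin N) : Prop :=
  dotp (p i) (q j) ≤ dotp (p i) (q i)

/-- `i R j`: existence of an RP-walk (all edge weights ≤ 1) from `i` to `j`. -/
def RPrel {N K : ℕ} (p q : Fin N → Fin K → ℝ) : Fin N → Fin N → Prop :=
  Relation.ReflTransGen (RPstep p q)

/-- `VRW(v)`: countries reachable from `v` by an RP-walk (revealed worse set). -/
def VRW {N K : ℕ} (p q : Fin N → Fin K → ℝ) (v : Fin N) : Set (Fin N) :=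
  {i | RPrel p q v i}

/-- `VRP(v)`: countries from which there is an RP-walk to `v` (revealed preferred set). -/
def VRP {N K : ℕ} (p q : Fin N → Fin K → ℝ) (v : Fin N) : Set (Fin N) :=
  {i | RPrel p q i v}

/-- Lower bound `M⁻(pr, v)` on the expenditure function. -/
noncomputable def Mminus {N K : ℕ} (p q : Fin N → Fin K → ℝ)
    (pr : Fin K → ℝ) (v : Fin N) : ℝ :=
  sInf {r | ∃ x : Fin K → ℝ, (∀ k, 0 ≤ x k) ∧
    (∀ i ∈ VRW p q v, dotp (p i) (q i) ≤ dotp (p i) x) ∧ r = dotp pr x}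

/-- Upper bound `M⁺(pr, v)` on the expenditure function. -/
noncomputable def Mplus {N K : ℕ} (p q : Fin N → Fin K → ℝ)
    (pr : Fin K → ℝ) (v : Fin N) : ℝ :=
  sInf {r | ∃ i ∈ VRP p q v, r = dotp pr (q i)}

/-- Expenditure function `e(pr, u(x₀)) = inf { pr · x : u(x) ≥ u(x₀), x ≥ 0 }`. -/
noncomputable def expend {K : ℕ} (u : (Fin K → ℝ) → ℝ)
    (pr : Fin K → ℝ) (x₀ : Fin K → ℝ) : ℝ :=
  sInf {r | ∃ x : Fin K → ℝ, (∀ k, 0 ≤ x k) ∧ u x₀ ≤ u x ∧ r = dotp pr x}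

/-!
Write `m = pᵢ · qᵢ`. Strict monotonicity upgrades rationalisation to cost minimisation: a bundle
at least as good as `q_l` costs at least `p_l · q_l`, since otherwise a uniform increase of it
would still be affordable at `p_l` and strictly better than `q_l`. Along an RP-walk utility
decreases, so `{q_l : l ∈ VRP(vᵢ)}` ⊆ `{x ≥ 0 : u x ≥ u qᵢ}` ⊆ `{x ≥ 0 : p_l · x ≥ p_l · q_l for
l ∈ VRW(vᵢ)}`. Minimising `pⱼ · x` over these three nested sets gives `M⁺ ≥ e ≥ M⁻`; at the prices
`pᵢ` all three minima equal `m`, attained at `qᵢ`. Finally `M⁺(pⱼ) ≤ pⱼ · qᵢ` because `qᵢ` lies in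
the smallest set, and `M⁻(pⱼ) ≥ (minₖ pⱼᵏ/pᵢᵏ) · m` because `pⱼ · x ≥ (minₖ pⱼᵏ/pᵢᵏ) pᵢ · x`.
-/

open Set

lemma dotp_nonneg {K : ℕ} {x y : Fin K → ℝ} (hx : ∀ k, 0 ≤ x k) (hy : ∀ k, 0 ≤ y k) :
    0 ≤ dotp x y :=
  Finset.sum_nonneg fun k _ => mul_nonneg (hx k) (hy k)

lemma iInf_div_mul_dotp_le {K : ℕ} {pr p x : Fin K → ℝ} (hp : ∀ k, 0 < p k)
    (hx : ∀ k, 0 ≤ x k) : (⨅ k, pr k / p k) * dotp p x ≤ dotp pr x := by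
  rw [dotp, dotp, Finset.mul_sum]
  refine Finset.sum_le_sum fun k _ => ?_
  calc (⨅ k, pr k / p k) * (p k * x k) ≤ pr k / p k * (p k * x k) :=
        mul_le_mul_of_nonneg_right (ciInf_le (finite_range _).bddBelow k)
          (mul_nonneg (hp k).le (hx k))
    _ = pr k * x k := by rw [← mul_assoc, div_mul_cancel₀ _ (hp k).ne']

section CostMinimum

variable {K : ℕ} {pr : Fin K → ℝ} {S T : Set (Fin K → ℝ)}

lemma bddBelow_image_dotp (hpr : ∀ k, 0 ≤ pr k) (hS : ∀ x ∈ S, ∀ k, 0 ≤ x k) :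
    BddBelow (dotp pr '' S) :=
  ⟨0, forall_mem_image.2 fun x hx => dotp_nonneg hpr (hS x hx)⟩

lemma csInf_image_dotp_le_of_subset (hpr : ∀ k, 0 ≤ pr k) (hT : ∀ x ∈ T, ∀ k, 0 ≤ x k)
    (hS : S.Nonempty) (hST : S ⊆ T) : sInf (dotp pr '' T) ≤ sInf (dotp pr '' S) :=
  csInf_le_csInf (bddBelow_image_dotp hpr hT) (hS.image _) (image_mono hST)

lemma csInf_image_dotp_eq {x : Fin K → ℝ} (hx : x ∈ S) (hmin : ∀ y ∈ S, dotp pr x ≤ dotp pr y) :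
    sInf (dotp pr '' S) = dotp pr x :=
  IsLeast.csInf_eq ⟨mem_image_of_mem _ hx, forall_mem_image.2 hmin⟩

end CostMinimum

def upperContour {K : ℕ} (u : (Fin K → ℝ) → ℝ) (x₀ : Fin K → ℝ) : Set (Fin K → ℝ) :=
  {x | (∀ k, 0 ≤ x k) ∧ u x₀ ≤ u x}

/-- The set over which `M⁻` minimises: an outer approximation of `upperContour u (q v)`. -/
def revealedUpperContour {N K : ℕ} (p q : Fin N → Fin K → ℝ) (v : Fin N) : Set (Fin K → ℝ) :=
  {x | (∀ k, 0 ≤ x k) ∧ ∀ l ∈ VRW p q v, dotp (p l) (q l) ≤ dotp (p l) x}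

lemma expend_eq_csInf {K : ℕ} (u : (Fin K → ℝ) → ℝ) (pr x₀ : Fin K → ℝ) :
    expend u pr x₀ = sInf (dotp pr '' upperContour u x₀) := by
  simp only [expend, upperContour, image, mem_ofPred_eq, and_assoc, eq_comm]

lemma Mminus_eq_csInf {N K : ℕ} (p q : Fin N → Fin K → ℝ) (pr : Fin K → ℝ) (v : Fin N) :
    Mminus p q pr v = sInf (dotp pr '' revealedUpperContour p q v) := by
  simp only [Mminus, revealedUpperContour, image, mem_ofPred_eq, and_assoc, eq_comm]

lemma Mplus_eq_csInf {N K : ℕ} (p q : Fin N → Fin K → ℝ) (pr : Fin K → ℝ) (v : Fin N) :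
    Mplus p q pr v = sInf (dotp pr '' (q '' VRP p q v)) := by
  rw [Mplus, image_image]
  simp only [image, eq_comm]

lemma dotp_le_of_utility_le {K : ℕ} {u : (Fin K → ℝ) → ℝ}
    (hmono : ∀ x y : Fin K → ℝ, (∀ k, x k ≤ y k) → x ≠ y → u x < u y)
    {p₀ q₀ : Fin K → ℝ} (hp : ∀ k, 0 < p₀ k)
    (hrat : ∀ x : Fin K → ℝ, (∀ k, 0 ≤ x k) → dotp p₀ x ≤ dotp p₀ q₀ → u x ≤ u q₀)
    {x : Fin K → ℝ} (hx : ∀ k, 0 ≤ x k) (hux : u q₀ ≤ u x) : dotp p₀ q₀ ≤ dotp p₀ x := by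
  by_contra! hcheap
  obtain ⟨k₀, -, -⟩ := Finset.exists_lt_of_sum_lt hcheap
  have hsum : 0 < ∑ k, p₀ k := Finset.sum_pos (fun k _ => hp k) ⟨k₀, Finset.mem_univ _⟩
  have hshift : ∀ t, dotp p₀ (fun k => x k + t) = dotp p₀ x + t * ∑ k, p₀ k := fun t => by
    simp only [dotp, mul_add, Finset.sum_add_distrib, ← Finset.sum_mul, mul_comm t]
  set ε := (dotp p₀ q₀ - dotp p₀ x) / ∑ k, p₀ k
  have hε : 0 < ε := div_pos (sub_pos.2 hcheap) hsum
  set y : Fin K → ℝ := fun k => x k + ε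
  have hy_cost : dotp p₀ y = dotp p₀ q₀ := by
    rw [hshift, div_mul_cancel₀ _ hsum.ne']
    ring
  have hy_ne : x ≠ y := fun h => by simpa [y, hε.ne'] using congrFun h k₀
  have hy_worse : u y ≤ u q₀ := hrat y (fun k => add_nonneg (hx k) hε.le) hy_cost.le
  have hy_better : u x < u y := hmono x y (fun k => by simp [y, hε.le]) hy_ne
  linarith

section RevealedPreference

variable {N K : ℕ} {p q : Fin N → Fin K → ℝ} {u : (Fin K → ℝ) → ℝ}

lemma utility_le_of_RPrel (hq : ∀ i k, 0 ≤ q i k)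
    (hrat : ∀ i, ∀ x : Fin K → ℝ, (∀ k, 0 ≤ x k) →
      dotp (p i) x ≤ dotp (p i) (q i) → u x ≤ u (q i))
    {a b : Fin N} (hab : RPrel p q a b) : u (q b) ≤ u (q a) := by
  induction hab with
  | refl => exact le_rfl
  | tail _ hstep ih => exact (hrat _ _ (hq _) hstep).trans ih

lemma image_VRP_subset_upperContour (hq : ∀ i k, 0 ≤ q i k)
    (hrat : ∀ i, ∀ x : Fin K → ℝ, (∀ k, 0 ≤ x k) →
      dotp (p i) x ≤ dotp (p i) (q i) → u x ≤ u (q i))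
    (v : Fin N) : q '' VRP p q v ⊆ upperContour u (q v) := by
  rintro _ ⟨l, hl, rfl⟩
  exact ⟨hq l, utility_le_of_RPrel hq hrat hl⟩

lemma upperContour_subset_revealedUpperContour (hp : ∀ i k, 0 < p i k)
    (hq : ∀ i k, 0 ≤ q i k)
    (hmono : ∀ x y : Fin K → ℝ, (∀ k, x k ≤ y k) → x ≠ y → u x < u y)
    (hrat : ∀ i, ∀ x : Fin K → ℝ, (∀ k, 0 ≤ x k) →
      dotp (p i) x ≤ dotp (p i) (q i) → u x ≤ u (q i))
    (v : Fin N) : upperContour u (q v) ⊆ revealedUpperContour p q v := fun _ ⟨hx, hux⟩ =>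
  ⟨hx, fun l hl => dotp_le_of_utility_le hmono (hp l) (hrat l) hx
    ((utility_le_of_RPrel hq hrat hl).trans hux)⟩

lemma mem_image_VRP (p q : Fin N → Fin K → ℝ) (v : Fin N) : q v ∈ q '' VRP p q v :=
  mem_image_of_mem q Relation.ReflTransGen.refl

lemma dotp_le_of_mem_revealedUpperContour {v : Fin N} {x : Fin K → ℝ}
    (hx : x ∈ revealedUpperContour p q v) : dotp (p v) (q v) ≤ dotp (p v) x :=
  hx.2 v Relation.ReflTransGen.refl

lemma iInf_div_mul_dotp_le_csInf_revealedUpperContour (hp : ∀ i k, 0 < p i k) {pr : Fin K → ℝ}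
    (hpr : ∀ k, 0 ≤ pr k) {v : Fin N} (hne : (revealedUpperContour p q v).Nonempty) :
    (⨅ k, pr k / p v k) * dotp (p v) (q v) ≤ sInf (dotp pr '' revealedUpperContour p q v) := by
  refine le_csInf (hne.image _) (forall_mem_image.2 fun x hx => ?_)
  calc (⨅ k, pr k / p v k) * dotp (p v) (q v)
      ≤ (⨅ k, pr k / p v k) * dotp (p v) x :=
        mul_le_mul_of_nonneg_left (dotp_le_of_mem_revealedUpperContour hx)
          (Real.iInf_nonneg fun k => div_nonneg (hpr k) (hp v k).le)
    _ ≤ dotp pr x := iInf_div_mul_dotp_le (hp v) hx.1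

end RevealedPreference

theorem stmt_12_general {N K : ℕ} (p q : Fin N → Fin K → ℝ)
    (hp : ∀ i k, 0 < p i k) (hq : ∀ i k, 0 ≤ q i k)
    (hm : ∀ i, 0 < dotp (p i) (q i))
    (u_RC : (Fin K → ℝ) → ℝ)
    (hmono : ∀ x y : Fin K → ℝ, (∀ k, x k ≤ y k) → x ≠ y → u_RC x < u_RC y)
    (hrat : ∀ i, ∀ x : Fin K → ℝ, (∀ k, 0 ≤ x k) →
      dotp (p i) x ≤ dotp (p i) (q i) → u_RC x ≤ u_RC (q i))
    (i j : Fin N) :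
    (⨅ k : Fin K, p j k / p i k) ≤ Mminus p q (p j) i / Mminus p q (p i) i ∧
    Mminus p q (p j) i / Mminus p q (p i) i
      ≤ expend u_RC (p j) (q i) / expend u_RC (p i) (q i) ∧
    expend u_RC (p j) (q i) / expend u_RC (p i) (q i)
      ≤ Mplus p q (p j) i / Mplus p q (p i) i ∧
    Mplus p q (p j) i / Mplus p q (p i) i ≤ dotp (p j) (q i) / dotp (p i) (q i) := by
  have hVU := image_VRP_subset_upperContour hq hrat i
  have hUR := upperContour_subset_revealedUpperContour hp hq hmono hrat i
  have hqi := mem_image_VRP p q i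
  have hpj : ∀ k, 0 ≤ p j k := fun k => (hp j k).le
  have hmin : ∀ x ∈ revealedUpperContour p q i, dotp (p i) (q i) ≤ dotp (p i) x :=
    fun _ hx => dotp_le_of_mem_revealedUpperContour hx
  rw [Mminus_eq_csInf, Mminus_eq_csInf, expend_eq_csInf, expend_eq_csInf, Mplus_eq_csInf,
    Mplus_eq_csInf, csInf_image_dotp_eq (hUR (hVU hqi)) hmin,
    csInf_image_dotp_eq (hVU hqi) fun x hx => hmin x (hUR hx),
    csInf_image_dotp_eq hqi fun x hx => hmin x (hUR (hVU hx))]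
  refine ⟨(le_div_iff₀ (hm i)).2 ?_, div_le_div_of_nonneg_right ?_ (hm i).le,
    div_le_div_of_nonneg_right ?_ (hm i).le, div_le_div_of_nonneg_right ?_ (hm i).le⟩
  · exact iInf_div_mul_dotp_le_csInf_revealedUpperContour hp hpj ⟨_, hUR (hVU hqi)⟩
  · exact csInf_image_dotp_le_of_subset hpj (fun _ hx => hx.1) ⟨_, hVU hqi⟩ hUR
  · exact csInf_image_dotp_le_of_subset hpj (fun _ hx => hx.1) ⟨_, hqi⟩ hVU
  · exact csInf_le (bddBelow_image_dotp hpj fun _ ⟨l, _, hl⟩ => hl ▸ hq l)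
      (mem_image_of_mem _ hqi)

/-- Laspeyres-style multilateral sandwich: if a locally non-satiated,
continuous, concave, strictly monotone utility `u_RC` rationalises the dataset then
for every country pair `(i, j)`, with indifference base `u_RC(q_i)`:
`min price relative ≤ M⁻ ratio ≤ Konüs index ≤ M⁺ ratio ≤ Laspeyres index`. -/
theorem stmt_12 {N K : ℕ} (hK : 0 < K) (p q : Fin N → Fin K → ℝ)
    (hp : ∀ i k, 0 < p i k) (hq : ∀ i k, 0 ≤ q i k)
    (hm : ∀ i, 0 < dotp (p i) (q i))
    (u_RC : (Fin K → ℝ) → ℝ)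
    (hcont : Continuous u_RC)
    (hconc : ConcaveOn ℝ {x : Fin K → ℝ | ∀ k, 0 ≤ x k} u_RC)
    (hmono : ∀ x y : Fin K → ℝ, (∀ k, x k ≤ y k) → x ≠ y → u_RC x < u_RC y)
    (hlns : ∀ x : Fin K → ℝ, (∀ k, 0 ≤ x k) → ∀ ε > (0 : ℝ),
      ∃ y : Fin K → ℝ, (∀ k, 0 ≤ y k) ∧ dist y x < ε ∧ u_RC x < u_RC y)
    (hrat : ∀ i, ∀ x : Fin K → ℝ, (∀ k, 0 ≤ x k) →
      dotp (p i) x ≤ dotp (p i) (q i) → u_RC x ≤ u_RC (q i))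
    (i j : Fin N) :
    (⨅ k : Fin K, p j k / p i k) ≤ Mminus p q (p j) i / Mminus p q (p i) i ∧
    Mminus p q (p j) i / Mminus p q (p i) i
      ≤ expend u_RC (p j) (q i) / expend u_RC (p i) (q i) ∧
    expend u_RC (p j) (q i) / expend u_RC (p i) (q i)
      ≤ Mplus p q (p j) i / Mplus p q (p i) i ∧
    Mplus p q (p j) i / Mplus p q (p i) i ≤ dotp (p j) (q i) / dotp (p i) (q i) :=
  stmt_12_general p q hp hq hm u_RC hmono hrat i j
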